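/- Let ω = e^{iπ/3} ∈ ℂ. There is no polynomial p with integer coefficients and integer m with 3 ∤ m such that p(ω) = -1 and p(-1) = m². -/

import Mathlib

/-! `ω = exp(πi/3)` is a primitive sixth root of unity, so `p(ω) = -1` makes the minimal polynomial
`Φ₆ = X² - X + 1` of `ω` divide `p + 1`. Evaluating at `-1`, where `Φ₆(-1) = 3`, gives
`p(-1) ≡ -1 (mod 3)`, whereas `m² + 1` is never divisible by `3`. -/

open Polynomial Complex

theorem Polynomial.cyclotomic_dvd_of_aeval_eq_zero {n : ℕ} {K : Type*} [Field K] [CharZero K]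
    {μ : K} (hμ : IsPrimitiveRoot μ n) (hn : 0 < n) {p : ℤ[X]} (hp : aeval μ p = 0) :
    cyclotomic n ℤ ∣ p :=
  cyclotomic_eq_minpoly hμ hn ▸ minpoly.isIntegrallyClosed_dvd (hμ.isIntegral hn) hp

theorem IsPrimitiveRoot.three_dvd_eval_neg_one_add_one {K : Type*} [Field K] [CharZero K]
    {μ : K} (hμ : IsPrimitiveRoot μ 6) {p : ℤ[X]} (hp : aeval μ p = -1) :
    3 ∣ p.eval (-1) + 1 := by
  have hdvd : cyclotomic 6 ℤ ∣ p + 1 :=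
    cyclotomic_dvd_of_aeval_eq_zero hμ (by norm_num) (by simp [hp])
  simpa [cyclotomic_six] using eval_dvd (x := -1) hdvd

theorem Complex.isPrimitiveRoot_exp_pi_mul_I_div_three :
    IsPrimitiveRoot (exp (Real.pi * I / 3)) 6 := by
  convert isPrimitiveRoot_exp 6 (by norm_num) using 2
  push_cast
  ring

theorem Int.not_three_dvd_sq_add_one (m : ℤ) : ¬ 3 ∣ m ^ 2 + 1 := by
  intro h
  have hzero := (ZMod.intCast_zmod_eq_zero_iff_dvd (m ^ 2 + 1) 3).2 h
  push_cast at hzero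
  generalize (m : ZMod 3) = x at hzero
  revert x
  decide

theorem stmt_2 :
    ¬ ∃ (p : Polynomial ℤ) (m : ℤ), ¬ (3 : ℤ) ∣ m ∧
      Polynomial.aeval (Complex.exp (Real.pi * Complex.I / 3)) p = -1 ∧
      p.eval (-1) = m ^ 2 := by
  rintro ⟨p, m, -, hp, hpm⟩
  have h3 := isPrimitiveRoot_exp_pi_mul_I_div_three.three_dvd_eval_neg_one_add_one hp
  exact Int.not_three_dvd_sq_add_one m (hpm ▸ h3)
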